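/- arXiv:math/0304425 — 5 statements merged into one kernel-verified Lean document; each statement's English description precedes it below -/
import Mathlib

section
/- Let p be a prime and let A, B, C be integers with gcd(A, B) = 1, A·B ≠ 0, and A^4 + B^4 = C^p. Then gcd(6, C) = 1; that is, C is divisible by neither 2 nor 3. -/
/-!
Fourth powers are squares, and a sum of two coprime squares is never divisible by `3` or by `4`:
modulo `3` and modulo `4`, `x² + y² = 0` forces `x² = 0`, so a common prime factor would divide both
terms. Since `p ≥ 2`, a factor `2` (resp. `3`) of `C` gives a factor `4` (resp. `3`) of `Cᵖ`.
-/

theorem Int.not_dvd_sq_add_sq_of_isCoprime {n : ℕ} {q : ℤ} (hq : Prime q) (hqn : q ∣ n)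
    (hn : ∀ x y : ZMod n, x ^ 2 + y ^ 2 = 0 → x ^ 2 = 0) {a b : ℤ} (hab : IsCoprime a b) :
    ¬ (n : ℤ) ∣ a ^ 2 + b ^ 2 := by
  have dvd_left (x y : ℤ) (hxy : (n : ℤ) ∣ x ^ 2 + y ^ 2) : q ∣ x := by
    have hsum : (x : ZMod n) ^ 2 + (y : ZMod n) ^ 2 = 0 := by
      exact_mod_cast (ZMod.intCast_zmod_eq_zero_iff_dvd _ n).mpr hxy
    have hx : ((x ^ 2 : ℤ) : ZMod n) = 0 := by push_cast; exact hn _ _ hsum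
    exact hq.dvd_of_dvd_pow (hqn.trans ((ZMod.intCast_zmod_eq_zero_iff_dvd _ n).mp hx))
  intro h
  exact hq.not_isUnit (hab.isUnit_of_dvd' (dvd_left a b h) (dvd_left b a (add_comm (a ^ 2) _ ▸ h)))

theorem Int.not_four_dvd_sq_add_sq {a b : ℤ} (hab : IsCoprime a b) : ¬ 4 ∣ a ^ 2 + b ^ 2 :=
  Int.not_dvd_sq_add_sq_of_isCoprime (n := 4) Int.prime_two (by norm_num) (by decide) hab

theorem Int.not_three_dvd_sq_add_sq {a b : ℤ} (hab : IsCoprime a b) : ¬ 3 ∣ a ^ 2 + b ^ 2 :=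
  Int.not_dvd_sq_add_sq_of_isCoprime (n := 3) Int.prime_three dvd_rfl (by decide) hab

theorem six_coprime_to_C_general (p : ℕ) (hp : p.Prime) (A B C : ℤ)
    (hAB : Int.gcd A B = 1) (h : A ^ 4 + B ^ 4 = C ^ p) :
    Int.gcd 6 C = 1 := by
  have hco : IsCoprime (A ^ 2) (B ^ 2) := (Int.isCoprime_iff_gcd_eq_one.mpr hAB).pow
  have hsq : (A ^ 2) ^ 2 + (B ^ 2) ^ 2 = C ^ p := by rw [← h]; ring
  have h2 : ¬ 2 ∣ C := fun hC =>
    Int.not_four_dvd_sq_add_sq hco <| hsq ▸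
      (pow_dvd_pow 2 hp.two_le).trans (pow_dvd_pow_of_dvd hC p)
  have h3 : ¬ 3 ∣ C := fun hC =>
    Int.not_three_dvd_sq_add_sq hco <| hsq ▸ dvd_pow hC hp.ne_zero
  rw [← Int.isCoprime_iff_gcd_eq_one, show (6 : ℤ) = 2 * 3 by norm_num, IsCoprime.mul_left_iff]
  exact ⟨Int.prime_two.coprime_iff_not_dvd.mpr h2, Int.prime_three.coprime_iff_not_dvd.mpr h3⟩

theorem six_coprime_to_C (p : ℕ) (hp : p.Prime) (A B C : ℤ)
    (hAB : Int.gcd A B = 1) (hABne : A * B ≠ 0) (h : A ^ 4 + B ^ 4 = C ^ p) :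
    Int.gcd 6 C = 1 :=
  six_coprime_to_C_general p hp A B C hAB h
end

section
/- Let p be a prime with p ≡ 3 (mod 4) and let C be a positive odd integer all of whose prime divisors are congruent to 1 modulo 4. Suppose that for every prime q dividing C and for all integers a, b with a^2 + b^2 = q, one has p ∣ a·b. Then for all integers R, S with R^2 + S^2 = C^p, one has p ∣ R·S. -/
lemma descent_aux (q a b R S M : ℤ) (hq : Prime q) (hab : a^2+b^2=q)
    (hRS : R^2+S^2=q*M) (hd : q ∣ a*R - b*S) :
    ∃ R' S' c : ℤ, R'^2+S'^2 = M ∧ R*S = (a^2-b^2)*(R'*S') + (a*b)*c := by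
  obtain ⟨R', e1⟩ := hd
  have hq0 : q ≠ 0 := hq.ne_zero
  have hd2 : q ∣ (a*S + b*R)^2 := ⟨q*M - q*R'^2, by
    linear_combination q*hRS + (R^2+S^2)*hab - (a*R - b*S + q*R')*e1⟩
  obtain ⟨S', e2⟩ := hq.dvd_of_dvd_pow hd2
  have hM : R'^2 + S'^2 = M := by
    have h2 : q^2*(R'^2+S'^2) = q^2*M := by
      linear_combination (-(a*R - b*S + q*R'))*e1 + (-(a*S + b*R + q*S'))*e2 +
        (R^2+S^2)*hab + q*hRS
    exact mul_left_cancel₀ (pow_ne_zero 2 hq0) h2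
  have hR : R = a*R' + b*S' := by
    apply mul_left_cancel₀ hq0
    linear_combination a*e1 + b*e2 - R*hab
  have hS : S = a*S' - b*R' := by
    apply mul_left_cancel₀ hq0
    linear_combination (-b)*e1 + a*e2 - S*hab
  exact ⟨R', S', S'^2 - R'^2, hM, by rw [hR, hS]; ring⟩

lemma descent (q a b R S M : ℤ) (hq : Prime q) (hab : a^2+b^2=q)
    (hRS : R^2+S^2=q*M) :
    ∃ R' S' c : ℤ, R'^2+S'^2 = M ∧ R*S = (a^2-b^2)*(R'*S') + (a*b)*c := by
  have hd : q ∣ (a*R - b*S)*(a*R + b*S) :=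
    ⟨a^2*M - S^2, by linear_combination a^2*hRS - S^2*hab⟩
  rcases hq.dvd_or_dvd hd with h | h
  · exact descent_aux q a b R S M hq hab hRS h
  · obtain ⟨R', S', c, h1, h2⟩ := descent_aux q a (-b) R S M hq
      (by linear_combination hab) hRS (by simpa using h)
    exact ⟨R', S', -c, h1, by linear_combination h2⟩

theorem product_formula_divisibility (p : ℕ) (hp : p.Prime) (hp4 : p % 4 = 3)
    (C : ℤ) (hCpos : 0 < C) (hCodd : Odd C)
    (hprimes : ∀ q : ℕ, q.Prime → (q : ℤ) ∣ C → q % 4 = 1)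
    (hdiv : ∀ q : ℕ, q.Prime → (q : ℤ) ∣ C →
      ∀ a b : ℤ, a ^ 2 + b ^ 2 = (q : ℤ) → (p : ℤ) ∣ a * b) :
    ∀ R S : ℤ, R ^ 2 + S ^ 2 = C ^ p → (p : ℤ) ∣ R * S := by
  have main : ∀ N : ℕ, (∀ q : ℕ, q.Prime → (q:ℤ) ∣ (N:ℤ) → (q:ℤ) ∣ C) →
      ∀ R S : ℤ, R^2 + S^2 = (N:ℤ) → (p:ℤ) ∣ R * S := by
    intro N
    induction N using Nat.strong_induction_on with
    | _ N ih =>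
      intro hN R S hRS
      rcases eq_or_ne N 0 with rfl | hN0
      · norm_num at hRS
        have hR2 : R^2 = 0 := le_antisymm (by nlinarith [sq_nonneg S]) (sq_nonneg R)
        have hR : R = 0 := by exact pow_eq_zero_iff (by norm_num) |>.mp hR2
        simp [hR]
      rcases eq_or_ne N 1 with rfl | hN1
      · rcases eq_or_ne R 0 with rfl | hR0
        · simp
        · have h1 : 1 ≤ R^2 := by
            have := Int.one_le_abs (by simpa using hR0)
            nlinarith [abs_nonneg R, sq_abs R]
          norm_num at hRS
          have hS2 : S^2 = 0 := le_antisymm (by nlinarith) (sq_nonneg S)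
          have hS : S = 0 := by exact pow_eq_zero_iff (by norm_num) |>.mp hS2
          simp [hS]
      -- N ≥ 2 : take the least prime factor q
      set q := N.minFac with hqdef
      have hq : q.Prime := Nat.minFac_prime hN1
      have hqN : q ∣ N := Nat.minFac_dvd N
      have hqC : (q:ℤ) ∣ C := hN q hq (by exact_mod_cast Int.natCast_dvd_natCast.mpr hqN)
      have hq4 : q % 4 = 1 := hprimes q hq hqC
      have : Fact q.Prime := ⟨hq⟩
      obtain ⟨a, b, hab⟩ := Nat.Prime.sq_add_sq (p := q) (by omega)
      have habZ : (a:ℤ)^2 + (b:ℤ)^2 = (q:ℤ) := by exact_mod_cast hab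
      have hpab : (p:ℤ) ∣ (a:ℤ) * (b:ℤ) := hdiv q hq hqC a b habZ
      obtain ⟨M, hMdef⟩ := hqN
      have hRSM : R^2 + S^2 = (q:ℤ) * (M:ℤ) := by
        rw [hRS, hMdef]; push_cast; ring
      obtain ⟨R', S', c, h1, h2⟩ := descent (q:ℤ) a b R S M
        (Nat.prime_iff_prime_int.mp hq) habZ hRSM
      have hMlt : M < N := by
        have h2 := hq.two_le
        rcases Nat.eq_zero_or_pos M with rfl | hMpos
        · omega
        · calc M < 2 * M := by omega
            _ ≤ q * M := Nat.mul_le_mul_right M h2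
            _ = N := hMdef.symm
      have hMC : ∀ r : ℕ, r.Prime → (r:ℤ) ∣ (M:ℤ) → (r:ℤ) ∣ C := by
        intro r hr hrM
        exact hN r hr (by rw [hMdef]; push_cast; exact Dvd.dvd.mul_left hrM _)
      have hpR'S' : (p:ℤ) ∣ R' * S' := ih M hMlt hMC R' S' h1
      rw [h2]
      exact dvd_add (Dvd.dvd.mul_left hpR'S' _) (Dvd.dvd.mul_right hpab _)
  intro R S hRS
  have hCp : (0:ℤ) < C ^ p := pow_pos hCpos p
  have hcast : ((C^p).toNat : ℤ) = C ^ p := Int.toNat_of_nonneg hCp.le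
  refine main (C^p).toNat ?_ R S ?_
  · intro r hr hrd
    rw [hcast] at hrd
    exact (Nat.prime_iff_prime_int.mp hr).dvd_of_dvd_pow hrd
  · rw [hcast]; exact hRS
end

section
/- Let p be a prime with p ≡ 3 (mod 4), and let q be a prime with q ≡ 1 (mod 4) such that q^2 ≡ 1 (mod p). Let α, β be integers with α^2 + β^2 = q and suppose 4·α^2 ≡ q·(q+1)^2 (mod p). Then q ≡ 1 (mod p), α^2 ≡ 1 (mod p), and p ∣ β. -/
/-!
Modulo `p`, the hypothesis `q² ≡ 1` leaves `q ≡ ±1`. If `q ≡ -1`, the congruence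
`4α² ≡ q(q+1)²` forces `p ∣ α`, so `β² ≡ q ≡ -1`, impossible as `-1` is not a square
modulo a prime `p ≡ 3 (mod 4)`. Hence `q ≡ 1`, then `4α² ≡ 4`, and `β² ≡ q - α² ≡ 0`.
-/

section NoSquareRootOfNegOne

variable {R : Type*} [CommRing R]

theorem two_ne_zero_of_not_isSquare_neg_one (hR : ¬IsSquare (-1 : R)) : (2 : R) ≠ 0 :=
  fun h ↦ hR ⟨1, by linear_combination -h⟩

theorem eq_one_and_sq_eq_one_and_eq_zero_of_four_mul_sq_eq [NoZeroDivisors R]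
    (hR : ¬IsSquare (-1 : R))
    {Q a b : R} (hQ : Q ^ 2 = 1) (hab : a ^ 2 + b ^ 2 = Q) (h : 4 * a ^ 2 = Q * (Q + 1) ^ 2) :
    Q = 1 ∧ a ^ 2 = 1 ∧ b = 0 := by
  have h4 : (4 : R) ≠ 0 := by
    simpa [show (4 : R) = 2 * 2 by norm_num] using two_ne_zero_of_not_isSquare_neg_one hR
  obtain rfl | rfl := sq_eq_one_iff.mp hQ
  · have ha : a ^ 2 = 1 := mul_left_cancel₀ h4 (by linear_combination h)
    exact ⟨rfl, ha, sq_eq_zero_iff.mp (by linear_combination hab - ha)⟩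
  · have ha : a = 0 := by simpa [h4] using (by linear_combination h : 4 * a ^ 2 = 0)
    subst ha
    exact absurd ⟨b, by linear_combination -hab⟩ hR

end NoSquareRootOfNegOne

theorem arithmetic_deduction_first_case_general (p q : ℕ) (hp : p.Prime)
    (hp4 : p % 4 = 3)
    (hq2 : (q : ℤ) ^ 2 ≡ 1 [ZMOD p])
    (α β : ℤ) (hαβ : α ^ 2 + β ^ 2 = (q : ℤ))
    (hcong : 4 * α ^ 2 ≡ (q : ℤ) * ((q : ℤ) + 1) ^ 2 [ZMOD p]) :
    (q : ℤ) ≡ 1 [ZMOD p] ∧ α ^ 2 ≡ 1 [ZMOD p] ∧ (p : ℤ) ∣ β := by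
  have : Fact p.Prime := ⟨hp⟩
  have hR : ¬IsSquare (-1 : ZMod p) := by simpa [ZMod.exists_sq_eq_neg_one_iff] using hp4
  simp only [← ZMod.intCast_eq_intCast_iff, ← ZMod.intCast_zmod_eq_zero_iff_dvd] at hq2 hcong ⊢
  push_cast at hq2 hcong ⊢
  exact eq_one_and_sq_eq_one_and_eq_zero_of_four_mul_sq_eq hR hq2
    (by exact_mod_cast congrArg (Int.cast : ℤ → ZMod p) hαβ) hcong

theorem arithmetic_deduction_first_case (p q : ℕ) (hp : p.Prime) (hq : q.Prime)
    (hp4 : p % 4 = 3) (hq4 : q % 4 = 1)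
    (hq2 : (q : ℤ) ^ 2 ≡ 1 [ZMOD p])
    (α β : ℤ) (hαβ : α ^ 2 + β ^ 2 = (q : ℤ))
    (hcong : 4 * α ^ 2 ≡ (q : ℤ) * ((q : ℤ) + 1) ^ 2 [ZMOD p]) :
    (q : ℤ) ≡ 1 [ZMOD p] ∧ α ^ 2 ≡ 1 [ZMOD p] ∧ (p : ℤ) ∣ β :=
  arithmetic_deduction_first_case_general p q hp hp4 hq2 α β hαβ hcong
end

section
/- Let p be an odd prime with p ≡ 3 (mod 8) or p ≡ 5 (mod 8) (equivalently, p ≢ ±1 (mod 8)). Then the equation x^4 + y^4 = z^p has no solutions in the First Case; that is, for all integers x, y, z with gcd(x, y) = 1 and x^4 + y^4 = z^p, one has p ∣ x·y. -/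
/-!
Suppose `p ∤ xy`. Since `gcd(x, y) = 1` and two odd fourth powers sum to `2 (mod 16)`, we may
take `x` odd and `y` even. In `ℤ[i]` the factors `x² ± y² i` of `z ^ p` are coprime, and every
unit of `ℤ[i]` is a `p`-th power, so `x² + y² i = (a + b i) ^ p`. Comparing imaginary parts,
`y² = b T` with `T = p a ^ (p - 1) + b² V` coprime to `b`, so `b = ±w²` and `T = ±c²`. Parity
forces `b` even and `a` odd; then `16 ∣ b²` and `T ≡ p (mod 8)`, while `±c² ≡ ±1 (mod 8)`.
-/

open Zsqrtd

local notation "ℤ[i]" => GaussianInt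

namespace Int

theorem sixteen_dvd_pow_four_sub_one_of_odd {x : ℤ} (hx : Odd x) : 16 ∣ x ^ 4 - 1 := by
  rw [show x ^ 4 - 1 = (x ^ 2 - 1) * (x ^ 2 + 1) by ring]
  exact mul_dvd_mul (eight_dvd_sq_sub_one_of_odd hx) (hx.pow (n := 2)).add_one.two_dvd

theorem pow_four_add_pow_four_ne_pow_of_odd {x y : ℤ} (hx : Odd x) (hy : Odd y) (z : ℤ) {n : ℕ}
    (hn : 3 ≤ n) : x ^ 4 + y ^ 4 ≠ z ^ n := by
  intro h
  obtain ⟨k, hk⟩ := sixteen_dvd_pow_four_sub_one_of_odd hx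
  obtain ⟨l, hl⟩ := sixteen_dvd_pow_four_sub_one_of_odd hy
  have h2 : 2 ∣ z := prime_two.dvd_of_dvd_pow (n := n) ⟨8 * k + 8 * l + 1, by omega⟩
  have h8 : 8 ∣ z ^ n := (pow_dvd_pow_of_dvd h2 3).trans (pow_dvd_pow z hn)
  omega

theorem four_dvd_of_isCoprime_of_mul_eq_sq {b T y : ℤ} (hbT : IsCoprime b T) (hy : b * T = y ^ 2)
    (hb : Even b) : 4 ∣ b := by
  obtain ⟨w, hw | hw⟩ := sq_of_isCoprime hbT hy
  · obtain ⟨k, rfl⟩ := even_iff_two_dvd.1 (even_pow.1 (hw ▸ hb)).1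
    exact ⟨k ^ 2, by rw [hw]; ring⟩
  · obtain ⟨k, rfl⟩ := even_iff_two_dvd.1 (even_pow.1 (even_neg.1 (hw ▸ hb))).1
    exact ⟨-k ^ 2, by rw [hw]; ring⟩

theorem eight_dvd_sub_one_or_add_one_of_isCoprime_of_mul_eq_sq {b T y : ℤ} (hbT : IsCoprime b T)
    (hy : b * T = y ^ 2) (hT : Odd T) : 8 ∣ T - 1 ∨ 8 ∣ T + 1 := by
  obtain ⟨c, hc | hc⟩ := sq_of_isCoprime hbT.symm (by rw [mul_comm, hy])
  · rw [hc] at hT ⊢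
    exact .inl (eight_dvd_sq_sub_one_of_odd ((odd_pow' two_ne_zero).1 hT))
  · rw [hc, odd_neg] at hT
    rw [hc, show -c ^ 2 + 1 = -(c ^ 2 - 1) by ring, dvd_neg]
    exact .inr (eight_dvd_sq_sub_one_of_odd ((odd_pow' two_ne_zero).1 hT))

end Int

namespace Zsqrtd

variable {d : ℤ}

theorem exists_re_im_pow_succ (β : ℤ√d) (n : ℕ) : ∃ U V : ℤ,
    (β ^ (n + 1)).re = β.re ^ (n + 1) + β.im ^ 2 * U ∧
    (β ^ (n + 1)).im = β.im * ((n + 1) * β.re ^ n + β.im ^ 2 * V) := by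
  induction n with
  | zero => exact ⟨0, 0, by simp, by simp⟩
  | succ n ih =>
    obtain ⟨U, V, hre, him⟩ := ih
    refine ⟨U * β.re + d * ((n + 1) * β.re ^ n + β.im ^ 2 * V), U + β.re * V, ?_, ?_⟩
    · rw [pow_succ, re_mul, hre, him]; ring
    · rw [pow_succ, im_mul, hre, him]; push_cast; ring

theorem norm_pow (β : ℤ√d) (n : ℕ) : (β ^ n).norm = β.norm ^ n :=
  map_pow normMonoidHom β n

end Zsqrtd

namespace GaussianInt

theorem norm_eq_sq_add_sq (α : ℤ[i]) : α.norm = α.re ^ 2 + α.im ^ 2 := by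
  rw [norm_def]; ring

theorem pow_four_eq_one_of_isUnit {u : ℤ[i]} (hu : IsUnit u) : u ^ 4 = 1 := by
  have hnorm : u.re ^ 2 + u.im ^ 2 = 1 := by
    rw [← norm_eq_sq_add_sq, norm_eq_one_iff' (by norm_num)]
    exact hu
  have hprod : u.re * u.im = 0 := by
    by_contra h
    have : 0 < (u.re * u.im) ^ 2 := by positivity
    nlinarith [sq_nonneg (u.re ^ 2 - u.im ^ 2)]
  ext <;> simp only [pow_succ, pow_zero, one_mul, re_mul, im_mul, re_one, im_one]
  · linear_combination (u.re ^ 2 + u.im ^ 2 + 1) * hnorm - 8 * u.re * u.im * hprod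
  · linear_combination 4 * (u.re ^ 2 - u.im ^ 2) * hprod

theorem exists_pow_eq_of_associated_pow {n : ℕ} (hn : Odd n) {α β : ℤ[i]}
    (h : Associated (β ^ n) α) : ∃ γ : ℤ[i], γ ^ n = α := by
  obtain ⟨u, rfl⟩ := h
  obtain ⟨k, rfl⟩ := hn
  refine ⟨β * (u : ℤ[i]) ^ (2 * k + 1), ?_⟩
  have hu : (u : ℤ[i]) ^ ((2 * k + 1) ^ 2) = u := by
    rw [show (2 * k + 1) ^ 2 = 4 * (k ^ 2 + k) + 1 by ring, pow_succ, pow_mul,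
      pow_four_eq_one_of_isUnit u.isUnit, one_pow, one_mul]
  rw [mul_pow, ← pow_mul, ← sq, hu]

-- `2` and the odd number `α * star α` both lie in the ideal `(α, star α)`.
theorem isCoprime_star_of_isCoprime_re_im {α : ℤ[i]} (hα : IsCoprime α.re α.im)
    (hodd : Odd α.norm) : IsCoprime α (star α) := by
  obtain ⟨u, v, huv⟩ := hα
  obtain ⟨k, hk⟩ := hodd
  obtain ⟨s, t, h2⟩ : ∃ s t : ℤ[i], s * α + t * star α = 2 := by
    refine ⟨u - v * (sqrtd : ℤ[i]), u + v * (sqrtd : ℤ[i]), ?_⟩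
    ext <;> simp
    · linear_combination 2 * huv
    · ring
  have hN : α * star α = 2 * k + 1 := by rw [← norm_eq_mul_conj, hk]; push_cast; rfl
  exact ⟨star α - k * s, -(k * t), by linear_combination hN - (k : ℤ[i]) * h2⟩

theorem exists_pow_eq_of_norm_eq_pow {n : ℕ} (hn : Odd n) {α : ℤ[i]} (hα : IsCoprime α.re α.im)
    (hodd : Odd α.norm) {z : ℤ} (h : α.norm = z ^ n) : ∃ γ : ℤ[i], γ ^ n = α := by
  obtain ⟨β, hβ⟩ := exists_associated_pow_of_mul_eq_pow'
    (isCoprime_star_of_isCoprime_re_im hα hodd) (by rw [← norm_eq_mul_conj, h]; push_cast; rfl)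
  exact exists_pow_eq_of_associated_pow hn hβ

-- `β ≡ i (mod 2)`, hence `β ^ n ≡ i ^ n = ±i (mod 2)`.
theorem odd_im_pow_of_even_re_of_odd_im {β : ℤ[i]} (hre : Even β.re) (him : Odd β.im) {n : ℕ}
    (hn : Odd n) : Odd (β ^ n).im := by
  have hβ : ((2 : ℤ) : ℤ[i]) ∣ β - sqrtd :=
    (intCast_dvd 2 _).2
      ⟨by simpa using hre.two_dvd, by simpa using (him.sub_odd odd_one).two_dvd⟩
  obtain ⟨k, rfl⟩ := hn
  have hi : (sqrtd ^ (2 * k + 1) : ℤ[i]) = ⟨0, (-1) ^ k⟩ := by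
    rw [pow_succ, pow_mul, sq, dmuld, ← Int.cast_pow]
    ext <;> simp only [re_mul, im_mul, re_intCast, im_intCast, re_sqrtd, im_sqrtd] <;> ring
  have h := (intCast_dvd 2 _).1 (hi ▸ hβ.trans (sub_dvd_pow_sub_pow β sqrtd (2 * k + 1)))
  simpa using (even_iff_two_dvd.2 h.2).add_odd (odd_neg_one.pow (n := k))

theorem even_im_of_even_im_pow {β : ℤ[i]} (hβ : Odd β.norm) {n : ℕ} (hn : Odd n)
    (h : Even (β ^ n).im) : Even β.im := by
  by_contra him
  rw [Int.not_even_iff_odd] at him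
  have hre : Even β.re := by
    by_contra hre
    rw [Int.not_even_iff_odd] at hre
    rw [norm_eq_sq_add_sq, ← Int.not_even_iff_odd] at hβ
    exact hβ (hre.pow.add_odd him.pow)
  exact Int.not_even_iff_odd.2 (odd_im_pow_of_even_re_of_odd_im hre him hn) h

theorem isCoprime_im_of_pow_eq {n : ℕ} (hn : n ≠ 0) {x y : ℤ} (hxy : IsCoprime x y)
    (hny : IsCoprime (n : ℤ) y) {β : ℤ[i]} (hβ : β ^ n = ⟨x ^ 2, y ^ 2⟩) {T : ℤ} (hT : T ≠ 0)
    (hy : β.im * T = y ^ 2) (hTn : β.im ∣ T - n * β.re ^ (n - 1)) : IsCoprime β.im T := by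
  refine isCoprime_of_prime_dvd (fun h => hT h.2) fun q hq hqb hqT => ?_
  have hqy : q ∣ y := hq.dvd_of_dvd_pow (hy ▸ dvd_mul_of_dvd_left hqb T)
  have hqn : q ∣ n * β.re ^ (n - 1) := by simpa using dvd_sub hqT (hqb.trans hTn)
  rcases hq.dvd_or_dvd hqn with hqn | hqa
  · exact hq.not_isUnit (hny.isUnit_of_dvd' hqn hqy)
  · have hqβ : (q : ℤ[i]) ∣ β ^ n :=
      dvd_pow ((intCast_dvd q β).2 ⟨hq.dvd_of_dvd_pow hqa, hqb⟩) hn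
    rw [hβ, intCast_dvd] at hqβ
    exact hq.not_isUnit (hxy.isUnit_of_dvd' (hq.dvd_of_dvd_pow hqβ.1) hqy)

theorem mod_eight_eq_one_or_seven_of_pow_eq {n : ℕ} (hn : Odd n) {x y : ℤ}
    (hxy : IsCoprime x y) (hny : IsCoprime (n : ℤ) y) (hx : Odd x) (hy : Even y) {β : ℤ[i]}
    (hβ : β ^ n = ⟨x ^ 2, y ^ 2⟩) : n % 8 = 1 ∨ n % 8 = 7 := by
  obtain ⟨m, rfl⟩ : ∃ m, n = m + 1 := ⟨n - 1, by have := hn.pos; omega⟩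
  obtain ⟨-, V, -, him⟩ := exists_re_im_pow_succ β m
  set a := β.re
  set b := β.im
  set T := ((m : ℤ) + 1) * a ^ m + b ^ 2 * V with hT
  have hyT : b * T = y ^ 2 := by rw [← him, hβ]
  have hnorm : Odd β.norm := by
    have h : β.norm ^ (m + 1) = x ^ 4 + y ^ 4 := by
      rw [← norm_pow, hβ, norm_eq_sq_add_sq]
      ring
    have : Odd (β.norm ^ (m + 1)) := h ▸ (hx.pow).add_even (hy.pow_of_ne_zero four_ne_zero)
    exact (Int.odd_pow' (Nat.succ_ne_zero m)).1 this
  have hb : Even b :=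
    even_im_of_even_im_pow hnorm hn (by rw [hβ]; exact hy.pow_of_ne_zero two_ne_zero)
  have ha : Odd a := by
    rw [norm_eq_sq_add_sq] at hnorm
    exact (Int.odd_pow' two_ne_zero).1 ((Int.odd_add.1 hnorm).2 (hb.pow_of_ne_zero two_ne_zero))
  have hTodd : Odd T :=
    ((by exact_mod_cast hn : Odd ((m : ℤ) + 1)).mul ha.pow).add_even
      ((hb.pow_of_ne_zero two_ne_zero).mul_right V)
  have hbT : IsCoprime b T :=
    isCoprime_im_of_pow_eq (Nat.succ_ne_zero m) hxy hny hβ (fun h => by simp [h] at hTodd) hyT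
      ⟨b * V, by push_cast; simp only [hT]; ring⟩
  have hb4 : 4 ∣ b := Int.four_dvd_of_isCoprime_of_mul_eq_sq hbT hyT hb
  have hT8 : 8 ∣ T - (m + 1 : ℕ) := by
    obtain ⟨k, hk⟩ : Even m := by simpa [Nat.odd_add_one] using hn
    obtain ⟨j, hj⟩ := Int.eight_dvd_sq_sub_one_of_odd (ha.pow (n := k))
    obtain ⟨c, hc⟩ := hb4
    have ham : a ^ m = (a ^ k) ^ 2 := by rw [hk, ← two_mul, mul_comm, pow_mul]
    refine ⟨(m + 1) * j + 2 * c ^ 2 * V, ?_⟩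
    rw [hT, ham, hc]
    push_cast
    linear_combination (↑m + 1) * hj
  have hT1 := Int.eight_dvd_sub_one_or_add_one_of_isCoprime_of_mul_eq_sq hbT hyT hTodd
  omega

end GaussianInt

theorem mod_eight_eq_one_or_seven_of_pow_four_add_pow_four_eq_pow {n : ℕ} (hn : Odd n)
    {x y z : ℤ} (hxy : IsCoprime x y) (hny : IsCoprime (n : ℤ) y) (hx : Odd x) (hy : Even y)
    (h : x ^ 4 + y ^ 4 = z ^ n) : n % 8 = 1 ∨ n % 8 = 7 := by
  have hnorm : (⟨x ^ 2, y ^ 2⟩ : ℤ[i]).norm = x ^ 4 + y ^ 4 := by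
    rw [GaussianInt.norm_eq_sq_add_sq]; ring
  obtain ⟨β, hβ⟩ := GaussianInt.exists_pow_eq_of_norm_eq_pow hn hxy.pow
    (hnorm ▸ hx.pow.add_even (hy.pow_of_ne_zero four_ne_zero)) (hnorm.trans h)
  exact GaussianInt.mod_eight_eq_one_or_seven_of_pow_eq hn hxy hny hx hy hβ

theorem fermat_quartic_first_case_three_five_mod_eight (p : ℕ) (hp : p.Prime)
    (hp8 : p % 8 = 3 ∨ p % 8 = 5) :
    ∀ x y z : ℤ, Int.gcd x y = 1 → x ^ 4 + y ^ 4 = z ^ p → (p : ℤ) ∣ x * y := by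
  intro x y z hgcd h
  have hp_odd : Odd p := hp.odd_of_ne_two (by omega)
  have hxy : IsCoprime x y := Int.isCoprime_iff_gcd_eq_one.2 hgcd
  have hpZ : Prime (p : ℤ) := Nat.prime_iff_prime_int.1 hp
  by_contra hpxy
  have hpx : IsCoprime (p : ℤ) x := hpZ.coprime_iff_not_dvd.2 fun h => hpxy (h.mul_right y)
  have hpy : IsCoprime (p : ℤ) y := hpZ.coprime_iff_not_dvd.2 fun h => hpxy (h.mul_left x)
  suffices p % 8 = 1 ∨ p % 8 = 7 by omega
  rcases Int.even_or_odd x with hx | hx <;> rcases Int.even_or_odd y with hy | hy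
  · exact absurd (hxy.isUnit_of_dvd' hx.two_dvd hy.two_dvd) Int.prime_two.not_isUnit
  · exact mod_eight_eq_one_or_seven_of_pow_four_add_pow_four_eq_pow hp_odd hxy.symm hpx hy hx
      (by rw [add_comm, h])
  · exact mod_eight_eq_one_or_seven_of_pow_four_add_pow_four_eq_pow hp_odd hxy hpy hx hy h
  · exact absurd h (Int.pow_four_add_pow_four_ne_pow_of_odd hx hy z (by omega))
end

section
/- Let q be a prime with q ≡ 1 (mod 4). Then there exist integers α and β with α^2 + β^2 = q such that the elliptic curve y^2 = x^3 - x over the field with q elements has exactly q + 1 - 2α projective points; equivalently, its trace of Frobenius a_q equals 2α where α^2 + β^2 = q. -/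
/-!
Over a finite field `F` of odd order, `y² = f(x)` has `#F + ∑ₓ χ(f x)` affine solutions, `χ` the
quadratic character; for `f = x³ - x` the sum is the Jacobsthal sum `φ(-1)`, where
`φ(n) = ∑ₓ χ(x³ + n x)`. Suppose `-1` is a square. Then `φ(n)` is even, since `x` and `-x`
contribute equally, and `φ(t² n) = χ(t) φ(n)`, so `φ(n)²` only depends on the square class of `n`.
Expanding `∑ₙ φ(n)²` and evaluating the inner sums `∑ₙ χ((n + x²)(n + y²))` through the Jacobi sum
`J(χ, χ) = -χ(-1)` gives `2 #F (#F - 1)`, hence `φ(1)² + φ(s)² = 4 #F` for a nonsquare `s`.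
Halving `φ(-1) = ±φ(1)` and `φ(s)` yields `α² + β² = #F` with `#E = #F + 1 - 2α`.
-/

open Finset

section JacobsthalSum

variable {F : Type*} [Field F] [Fintype F] [DecidableEq F]

local notation "χ" => quadraticChar F

def jacobsthalSum (F : Type*) [Field F] [Fintype F] [DecidableEq F] (n : F) : ℤ :=
  ∑ x : F, quadraticChar F (x ^ 3 + n * x)

lemma sum_quadraticChar_sq : ∑ x : F, χ x ^ 2 = Fintype.card F - 1 := by
  have h : ∀ x : F, χ x ^ 2 = if x = 0 then 0 else 1 := fun x => by
    split_ifs with hx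
    · simp [hx]
    · exact quadraticChar_sq_one hx
  simp only [h]
  simp [sum_ite, filter_ne', Nat.cast_sub Fintype.card_pos]

lemma natCard_sq_eq_card_add_sum_quadraticChar (hF : ringChar F ≠ 2) (f : F → F) :
    (Nat.card {P : F × F // P.2 ^ 2 = f P.1} : ℤ) = Fintype.card F + ∑ x, χ (f x) := by
  rw [Nat.card_eq_fintype_card, Fintype.card_subtype, card_filter, Fintype.sum_prod_type]
  have h : ∀ x : F, (∑ y : F, if y ^ 2 = f x then 1 else 0 : ℤ) = χ (f x) + 1 := fun x => by
    rw [← quadraticChar_card_sqrts hF, Set.toFinset_ofPred, card_filter]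
    push_cast
    rfl
  push_cast
  simp only [h, sum_add_distrib, sum_const, card_univ, nsmul_eq_mul, mul_one]
  ring

lemma sum_quadraticChar_add_mul_add (hF : ringChar F ≠ 2) (a b : F) :
    ∑ n : F, χ ((n + a) * (n + b)) = if a = b then (Fintype.card F : ℤ) - 1 else -1 := by
  split_ifs with hab
  · subst hab
    rw [← sum_quadraticChar_sq]
    exact Fintype.sum_equiv (Equiv.addRight a) _ _ fun n => by
      rw [Equiv.coe_addRight, sq, map_mul]
  · have hd : b - a ≠ 0 := sub_ne_zero.mpr (Ne.symm hab)
    have hχ : χ (-1) ^ 2 = 1 := quadraticChar_sq_one (neg_ne_zero.mpr one_ne_zero)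
    -- the substitution `n = (b - a) x - b` turns `(n + a) (n + b)` into `-(b - a)² x (1 - x)`
    calc ∑ n, χ ((n + a) * (n + b)) = ∑ x, χ (-1) * (χ x * χ (1 - x)) :=
          (Fintype.sum_equiv ((Equiv.mulLeft₀ (b - a) hd).trans (Equiv.subRight b)) _ _
            fun x => by
              simp only [Equiv.trans_apply, Equiv.mulLeft₀_apply, Equiv.subRight_apply]
              rw [← map_mul, ← map_mul, show ((b - a) * x - b + a) * ((b - a) * x - b + b)
                = (b - a) ^ 2 * (-1 * (x * (1 - x))) by ring, map_mul χ ((b - a) ^ 2),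
                quadraticChar_sq_one' hd, one_mul]).symm
      _ = χ (-1) * jacobiSum χ χ⁻¹ := by
          rw [(quadraticChar_isQuadratic F).inv, jacobiSum, mul_sum]
      _ = -1 := by
          rw [jacobiSum_nontrivial_inv (quadraticChar_ne_one hF)]
          linear_combination -hχ

lemma quadraticChar_pow_three (x : F) : χ (x ^ 3) = χ x := by
  rw [map_pow, ← MulChar.pow_apply' _ three_ne_zero,
    (quadraticChar_isQuadratic F).pow_odd (by decide)]

lemma jacobsthalSum_zero (hF : ringChar F ≠ 2) : jacobsthalSum F 0 = 0 := by
  simp only [jacobsthalSum, zero_mul, add_zero, quadraticChar_pow_three, quadraticChar_sum_zero hF]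

lemma jacobsthalSum_mul_sq {t : F} (ht : t ≠ 0) (n : F) :
    jacobsthalSum F (t ^ 2 * n) = χ t * jacobsthalSum F n := by
  rw [jacobsthalSum, jacobsthalSum, mul_sum]
  refine (Fintype.sum_equiv (Equiv.mulLeft₀ t ht) _ _ fun x => ?_).symm
  rw [Equiv.mulLeft₀_apply, show (t * x) ^ 3 + t ^ 2 * n * (t * x) = t ^ 3 * (x ^ 3 + n * x) by
    ring, map_mul, quadraticChar_pow_three]

lemma quadraticChar_neg_one_eq_one (h : IsSquare (-1 : F)) : χ (-1) = 1 :=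
  (quadraticChar_one_iff_isSquare (neg_ne_zero.mpr one_ne_zero)).mpr h

lemma even_jacobsthalSum (hF : ringChar F ≠ 2) (h : IsSquare (-1 : F)) (n : F) :
    Even (jacobsthalSum F n) := by
  rw [← ZMod.intCast_eq_zero_iff_even, jacobsthalSum, Int.cast_sum]
  -- `x` and `-x` contribute equally, and `x = 0` is the only fixed point, contributing `0`
  refine sum_ninvolution (fun x => -x) (fun x => ?_) (fun x hx hfix => hx ?_) (fun x => mem_univ _)
    neg_neg
  · rw [show (-x) ^ 3 + n * -x = -1 * (x ^ 3 + n * x) by ring, map_mul, quadraticChar_neg_one_eq_one h, one_mul, ← two_mul,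
      show (2 : ZMod 2) = 0 from rfl, zero_mul]
  · rw [(Ring.eq_self_iff_eq_zero_of_char_ne_two hF).mp hfix]
    simp

lemma sum_quadraticChar_mul_of_sq_eq_sq (hF : ringChar F ≠ 2) (h : IsSquare (-1 : F)) (x : F) :
    ∑ y : F, (if x ^ 2 = y ^ 2 then χ (x * y) else 0) = 2 * χ x ^ 2 := by
  rcases eq_or_ne x 0 with rfl | hx
  · simp
  have hroots : ({y | x ^ 2 = y ^ 2} : Finset F) = {x, -x} := by
    ext y
    rw [mem_filter, mem_insert, mem_singleton, eq_comm, sq_eq_sq_iff_eq_or_eq_neg]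
    simp
  have hxx : x ∉ ({-x} : Finset F) := by
    simpa [eq_comm] using (Ring.eq_self_iff_eq_zero_of_char_ne_two hF).not.mpr hx
  rw [← sum_filter, hroots, sum_insert hxx, sum_singleton, ← sq,
    show x * -x = -1 * x ^ 2 by ring, map_mul χ (-1), quadraticChar_neg_one_eq_one h, map_pow]
  ring

lemma sum_sq_jacobsthalSum (hF : ringChar F ≠ 2) (h : IsSquare (-1 : F)) :
    ∑ n : F, jacobsthalSum F n ^ 2 = 2 * Fintype.card F * (Fintype.card F - 1) := by
  set q : ℤ := (Fintype.card F : ℤ)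
  have hexpand : ∀ n : F, jacobsthalSum F n ^ 2
      = ∑ x : F, ∑ y : F, χ (x * y) * χ ((n + x ^ 2) * (n + y ^ 2)) := fun n => by
    rw [sq, jacobsthalSum, sum_mul_sum]
    refine sum_congr rfl fun x _ => sum_congr rfl fun y _ => ?_
    rw [← map_mul, ← map_mul]
    ring_nf
  calc ∑ n : F, jacobsthalSum F n ^ 2
      = ∑ x : F, ∑ y : F, χ (x * y) * ∑ n : F, χ ((n + x ^ 2) * (n + y ^ 2)) := by
        simp only [hexpand, mul_sum]
        rw [sum_comm]
        exact sum_congr rfl fun x _ => sum_comm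
    _ = ∑ x : F, ∑ y : F, (q * (if x ^ 2 = y ^ 2 then χ (x * y) else 0) - χ x * χ y) := by
        simp only [sum_quadraticChar_add_mul_add hF]
        refine sum_congr rfl fun x _ => sum_congr rfl fun y _ => ?_
        split_ifs <;> rw [map_mul] <;> ring
    _ = q * ∑ x : F, 2 * χ x ^ 2 - (∑ x : F, χ x) * ∑ y : F, χ y := by
        rw [sum_mul_sum, mul_sum, ← sum_sub_distrib]
        refine sum_congr rfl fun x _ => ?_
        rw [sum_sub_distrib, ← mul_sum, sum_quadraticChar_mul_of_sq_eq_sq hF h]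
    _ = 2 * q * (q - 1) := by
        rw [← mul_sum, sum_quadraticChar_sq, quadraticChar_sum_zero hF]
        ring

lemma sq_jacobsthalSum_mul_sq {t : F} (ht : t ≠ 0) (n : F) :
    jacobsthalSum F (t ^ 2 * n) ^ 2 = jacobsthalSum F n ^ 2 := by
  rw [jacobsthalSum_mul_sq ht, mul_pow, quadraticChar_sq_one ht, one_mul]

lemma sq_jacobsthalSum_add_sq_jacobsthalSum_mul (hF : ringChar F ≠ 2) {s : F} (hs : ¬IsSquare s)
    (n : F) : jacobsthalSum F n ^ 2 + jacobsthalSum F (s * n) ^ 2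
      = χ n ^ 2 * (jacobsthalSum F 1 ^ 2 + jacobsthalSum F s ^ 2) := by
  rcases eq_or_ne n 0 with rfl | hn
  · simp [jacobsthalSum_zero hF]
  have hs0 : s ≠ 0 := by rintro rfl; exact hs IsSquare.zero
  rw [quadraticChar_sq_one hn, one_mul]
  by_cases hsq : IsSquare n
  · obtain ⟨t, rfl⟩ := hsq
    have ht : t ≠ 0 := by rintro rfl; simp at hn
    rw [show s * (t * t) = t ^ 2 * s by ring, show t * t = t ^ 2 * 1 by ring,
      sq_jacobsthalSum_mul_sq ht, sq_jacobsthalSum_mul_sq ht]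
  · obtain ⟨t, ht⟩ : IsSquare (n * s) := by
      rw [← quadraticChar_one_iff_isSquare (mul_ne_zero hn hs0), map_mul,
        quadraticChar_neg_one_iff_not_isSquare.mpr hsq,
        quadraticChar_neg_one_iff_not_isSquare.mpr hs, neg_mul_neg, one_mul]
    have ht0 : t ≠ 0 := by rintro rfl; simp [hn, hs0] at ht
    rw [show n = (t / s) ^ 2 * s by field_simp; linear_combination ht,
      show s * ((t / s) ^ 2 * s) = t ^ 2 * 1 by field_simp,
      sq_jacobsthalSum_mul_sq (div_ne_zero ht0 hs0), sq_jacobsthalSum_mul_sq ht0, add_comm]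

lemma sq_jacobsthalSum_one_add_sq_jacobsthalSum (hF : ringChar F ≠ 2) (h : IsSquare (-1 : F))
    {s : F} (hs : ¬IsSquare s) :
    jacobsthalSum F 1 ^ 2 + jacobsthalSum F s ^ 2 = 4 * Fintype.card F := by
  have hs0 : s ≠ 0 := by rintro rfl; exact hs IsSquare.zero
  have hq : (Fintype.card F - 1 : ℤ) ≠ 0 :=
    sub_ne_zero.mpr (by exact_mod_cast (Fintype.one_lt_card (α := F)).ne')
  refine mul_left_cancel₀ hq ?_
  calc (Fintype.card F - 1 : ℤ) * (jacobsthalSum F 1 ^ 2 + jacobsthalSum F s ^ 2)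
      = ∑ n : F, (jacobsthalSum F n ^ 2 + jacobsthalSum F (s * n) ^ 2) := by
        simp only [sq_jacobsthalSum_add_sq_jacobsthalSum_mul hF hs, ← sum_mul,
          sum_quadraticChar_sq]
    _ = 2 * ∑ n : F, jacobsthalSum F n ^ 2 := by
        rw [sum_add_distrib, two_mul, Fintype.sum_equiv (Equiv.mulLeft₀ s hs0)
          (fun n => jacobsthalSum F (s * n) ^ 2) (fun n => jacobsthalSum F n ^ 2) fun n => rfl]
    _ = (Fintype.card F - 1 : ℤ) * (4 * Fintype.card F) := by
        rw [sum_sq_jacobsthalSum hF h]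
        ring

end JacobsthalSum

theorem point_count_y2_eq_x3_sub_x_one_mod_four (q : ℕ) (hq : q.Prime)
    (hq4 : q % 4 = 1) :
    ∃ α β : ℤ, α ^ 2 + β ^ 2 = (q : ℤ) ∧
      (Nat.card {P : ZMod q × ZMod q // P.2 ^ 2 = P.1 ^ 3 - P.1} : ℤ) + 1
        = (q : ℤ) + 1 - 2 * α := by
  have : Fact q.Prime := ⟨hq⟩
  have hF : ringChar (ZMod q) ≠ 2 := by rw [ZMod.ringChar_zmod_n]; omega
  have h : IsSquare (-1 : ZMod q) := ZMod.exists_sq_eq_neg_one_iff.mpr (by omega)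
  obtain ⟨s, hs⟩ := FiniteField.exists_nonsquare hF
  obtain ⟨a, ha⟩ := even_jacobsthalSum hF h (-1)
  obtain ⟨b, hb⟩ := even_jacobsthalSum hF h s
  have hsq : jacobsthalSum (ZMod q) (-1) ^ 2 + jacobsthalSum (ZMod q) s ^ 2 = 4 * q := by
    obtain ⟨t, ht⟩ := h
    have ht0 : t ≠ 0 := by rintro rfl; simp at ht
    rw [ht, show t * t = t ^ 2 * 1 by ring, sq_jacobsthalSum_mul_sq ht0]
    simpa only [ZMod.card] using sq_jacobsthalSum_one_add_sq_jacobsthalSum hF ⟨t, ht⟩ hs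
  have hcount : (Nat.card {P : ZMod q × ZMod q // P.2 ^ 2 = P.1 ^ 3 - P.1} : ℤ)
      = q + jacobsthalSum (ZMod q) (-1) := by
    rw [natCard_sq_eq_card_add_sum_quadraticChar hF fun x => x ^ 3 - x, ZMod.card]
    simp only [jacobsthalSum, neg_one_mul, ← sub_eq_add_neg]
  refine ⟨-a, b, ?_, ?_⟩
  · rw [ha, hb] at hsq
    linarith
  · rw [hcount, ha]
    ring
end
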